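/- arXiv:1407.1158 — 2 statements merged into one kernel-verified Lean document; each statement's English description precedes it below -/
import Mathlib

section
/- Fix P ≥ 1, K ≥ 0, and sequences (α_k)_{k≥1}, (η_k)_{k≥1} of positive reals with α_k > 2 for all k. Let (λ_{pk})_{1≤p≤P, k≥1} be mutually independent real random variables such that λ_{pk} has the GDP(α_k, η_k) distribution for every p and k, and suppose S := ∑_{k=K+1}^∞ ( Var[λ_{1k}] + (E[|λ_{1k}|])² ) < ∞. Then for every ε > 0, the probability that there exist i, j ∈ {1, …, P} with ∑_{k=K+1}^∞ |λ_{ik}| |λ_{jk}| ≥ ε is at most (P²/ε) · S. -/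
/-!
For `α > 2` the density of GDP(α, η) satisfies `x² p(x) = O((1 + |x|/η)^{-(α-1)})`, so every
`λ_{pk}` is square integrable. Since `|x| |y| ≤ (x² + y²) / 2` and all `λ_{pk}` with the same `k`
have the same law, `E[|λ_{ik}| |λ_{jk}|] ≤ E[λ_{1k}²] = Var[λ_{1k}] + E[λ_{1k}]² ≤ Var[λ_{1k}] +
E[|λ_{1k}|]²`. Summing over `k > K` bounds the expectation of each tail sum by `S`, and Markov's
inequality with a union bound over the `P²` pairs `(i, j)` gives the claim.
-/

open MeasureTheory ProbabilityTheory

/-- Density of the generalized double Pareto distribution GDP(α, η). -/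
noncomputable def gdpPdf (α η x : ℝ) : ℝ :=
  (α / (2 * η)) * (1 + |x| / η) ^ (-(α + 1))

/-- The generalized double Pareto distribution GDP(α, η) as a measure on ℝ. -/
noncomputable def gdpMeasure (α η : ℝ) : Measure ℝ :=
  MeasureTheory.volume.withDensity (fun x => ENNReal.ofReal (gdpPdf α η x))

/-- `X` has the GDP(α, η) distribution under `μ`. -/
def HasGDP {Ω : Type*} [MeasurableSpace Ω] (μ : Measure Ω) (X : Ω → ℝ) (α η : ℝ) : Prop :=
  Measurable X ∧ Measure.map X μ = gdpMeasure α η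

open scoped ENNReal

section GDP

variable {α η : ℝ}

lemma gdpPdf_nonneg (hα : 0 ≤ α) (hη : 0 ≤ η) (x : ℝ) : 0 ≤ gdpPdf α η x := by
  unfold gdpPdf; positivity

@[fun_prop]
lemma measurable_gdpPdf (α η : ℝ) : Measurable (gdpPdf α η) := by
  unfold gdpPdf; fun_prop

lemma sq_mul_gdpPdf_le (hα : 0 ≤ α) (hη : 0 < η) (x : ℝ) :
    x ^ 2 * gdpPdf α η x ≤ α * η / 2 * (1 + |x / η|) ^ (-(α - 1)) := by
  set b := 1 + |x / η| with hb
  have hb0 : 0 < b := by positivity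
  have hx : x ^ 2 ≤ η ^ 2 * b ^ (2 : ℝ) := by
    rw [Real.rpow_two, ← mul_pow, ← sq_abs x]
    refine pow_le_pow_left₀ (abs_nonneg x) ?_ 2
    rw [hb, mul_add, abs_div, abs_of_pos hη, mul_div_cancel₀ _ hη.ne']
    linarith
  have hpdf : gdpPdf α η x = α / (2 * η) * b ^ (-(α + 1)) := by
    rw [gdpPdf, hb, abs_div, abs_of_pos hη]
  calc x ^ 2 * gdpPdf α η x ≤ η ^ 2 * b ^ (2 : ℝ) * (α / (2 * η) * b ^ (-(α + 1))) := by
        rw [hpdf]; gcongr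
    _ = α * η / 2 * (b ^ (2 : ℝ) * b ^ (-(α + 1))) := by field_simp
    _ = α * η / 2 * b ^ (-(α - 1)) := by rw [← Real.rpow_add hb0]; ring_nf

lemma integrable_sq_mul_gdpPdf (hα : 2 < α) (hη : 0 < η) :
    Integrable (fun x : ℝ => x ^ 2 * gdpPdf α η x) := by
  have hdom : Integrable (fun x : ℝ => α * η / 2 * (1 + |x / η|) ^ (-(α - 1))) := by
    have h := (integrable_one_add_norm (E := ℝ) (μ := volume) (r := α - 1)
      (by rw [Module.finrank_self]; push_cast; linarith)).comp_div hη.ne'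
    simpa only [Real.norm_eq_abs] using h.const_mul (α * η / 2)
  refine hdom.mono' (by fun_prop) (Filter.Eventually.of_forall fun x => ?_)
  rw [Real.norm_of_nonneg (mul_nonneg (sq_nonneg x) (gdpPdf_nonneg (by linarith) hη.le x))]
  exact sq_mul_gdpPdf_le (by linarith) hη x

lemma memLp_id_gdpMeasure (hα : 2 < α) (hη : 0 < η) : MemLp id 2 (gdpMeasure α η) := by
  rw [memLp_two_iff_integrable_sq aestronglyMeasurable_id, gdpMeasure,
    integrable_withDensity_iff_integrable_smul' (measurable_gdpPdf α η).ennreal_ofReal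
      (Filter.Eventually.of_forall fun _ => ENNReal.ofReal_lt_top)]
  refine (integrable_sq_mul_gdpPdf hα hη).congr (Filter.Eventually.of_forall fun x => ?_)
  simp only [id, smul_eq_mul]
  rw [ENNReal.toReal_ofReal (gdpPdf_nonneg (by linarith) hη.le x), mul_comm]

lemma HasGDP.memLp_two {Ω : Type*} [MeasurableSpace Ω] {μ : Measure Ω} {X : Ω → ℝ}
    (hX : HasGDP μ X α η) (hα : 2 < α) (hη : 0 < η) : MemLp X 2 μ := by
  have h := memLp_id_gdpMeasure hα hη
  rw [← hX.2, memLp_map_measure_iff aestronglyMeasurable_id hX.1.aemeasurable] at h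
  exact h

end GDP

section Expectation

variable {Ω : Type*} [MeasurableSpace Ω] {μ : Measure Ω}

lemma integral_sq_le_variance_add_sq_integral_abs [IsProbabilityMeasure μ] {X : Ω → ℝ}
    (hX : MemLp X 2 μ) : ∫ ω, X ω ^ 2 ∂μ ≤ variance X μ + (∫ ω, |X ω| ∂μ) ^ 2 := by
  have hmean : (∫ ω, X ω ∂μ) ^ 2 ≤ (∫ ω, |X ω| ∂μ) ^ 2 := by
    rw [← sq_abs]
    exact pow_le_pow_left₀ (abs_nonneg _) abs_integral_le_integral_abs 2
  have hvar := variance_eq_sub hX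
  simp only [Pi.pow_apply] at hvar
  linarith

lemma lintegral_abs_mul_abs_le_integral_sq {X Y Z : Ω → ℝ} (hX : IdentDistrib X Z μ μ)
    (hY : IdentDistrib Y Z μ μ) (hZ : MemLp Z 2 μ) :
    ∫⁻ ω, ENNReal.ofReal (|X ω| * |Y ω|) ∂μ ≤ ENNReal.ofReal (∫ ω, Z ω ^ 2 ∂μ) := by
  have hsq : ∀ {W : Ω → ℝ}, IdentDistrib W Z μ μ →
      Integrable (fun ω => W ω ^ 2) μ ∧ ∫ ω, W ω ^ 2 ∂μ = ∫ ω, Z ω ^ 2 ∂μ := fun hW =>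
    ⟨(hW.memLp_iff.2 hZ).integrable_sq, (hW.comp (measurable_id.pow_const 2)).integral_eq⟩
  obtain ⟨hXi, hXe⟩ := hsq hX
  obtain ⟨hYi, hYe⟩ := hsq hY
  calc ∫⁻ ω, ENNReal.ofReal (|X ω| * |Y ω|) ∂μ
      ≤ ∫⁻ ω, ENNReal.ofReal ((X ω ^ 2 + Y ω ^ 2) / 2) ∂μ := by
        refine lintegral_mono fun ω => ENNReal.ofReal_le_ofReal ?_
        nlinarith [two_mul_le_add_sq |X ω| |Y ω|, sq_abs (X ω), sq_abs (Y ω)]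
    _ = ENNReal.ofReal (∫ ω, (X ω ^ 2 + Y ω ^ 2) / 2 ∂μ) :=
        (ofReal_integral_eq_lintegral_ofReal ((hXi.add hYi).div_const 2 :
          Integrable (fun ω => (X ω ^ 2 + Y ω ^ 2) / 2) μ)
          (ae_of_all _ fun ω =>
            div_nonneg (add_nonneg (sq_nonneg _) (sq_nonneg _)) zero_le_two)).symm
    _ = ENNReal.ofReal (∫ ω, Z ω ^ 2 ∂μ) := by
        rw [integral_div, integral_add hXi hYi, hXe, hYe, add_self_div_two]

lemma lintegral_tsum_le_ofReal_of_hasSum {f : ℕ → Ω → ℝ≥0∞}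
    (hf : ∀ k, AEMeasurable (f k) μ) {a : ℕ → ℝ} {S : ℝ} (ha : HasSum a S) (ha0 : ∀ k, 0 ≤ a k)
    (hfa : ∀ k, ∫⁻ ω, f k ω ∂μ ≤ ENNReal.ofReal (a k)) :
    ∫⁻ ω, ∑' k, f k ω ∂μ ≤ ENNReal.ofReal S := by
  rw [lintegral_tsum hf, ← ha.tsum_eq, ENNReal.ofReal_tsum_of_nonneg ha0 ha.summable]
  exact ENNReal.tsum_le_tsum hfa

lemma measure_exists_le_le_card_mul_div {ι : Type*} [Fintype ι] {f : ι → Ω → ℝ≥0∞}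
    (hf : ∀ i, AEMeasurable (f i) μ) {C ε : ℝ≥0∞} (hC : ∀ i, ∫⁻ ω, f i ω ∂μ ≤ C)
    (hε : ε ≠ 0) (hε' : ε ≠ ∞) :
    μ {ω | ∃ i, ε ≤ f i ω} ≤ Fintype.card ι * (C / ε) := by
  rw [Set.ofPred_exists]
  calc μ (⋃ i, {ω | ε ≤ f i ω}) ≤ ∑ i, μ {ω | ε ≤ f i ω} := measure_iUnion_fintype_le μ _
    _ ≤ ∑ _i : ι, C / ε := Finset.sum_le_sum fun i _ =>
        (meas_ge_le_lintegral_div (hf i) hε hε').trans (ENNReal.div_le_div_right (hC i) ε)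
    _ = Fintype.card ι * (C / ε) := by
        rw [Finset.sum_const, nsmul_eq_mul, Finset.card_univ]

end Expectation

theorem gdp_tail_sum_markov_bound_general {Ω : Type*} [MeasurableSpace Ω] (μ : Measure Ω)
    [IsProbabilityMeasure μ] (P : ℕ) (hP : 0 < P) (K : ℕ) (α η : ℕ → ℝ)
    (hα : ∀ k : ℕ, 1 ≤ k → 2 < α k) (hη : ∀ k : ℕ, 1 ≤ k → 0 < η k)
    (Λ : Fin P × ℕ → Ω → ℝ) (hmeas : ∀ pk, Measurable (Λ pk))
    (hlaw : ∀ (p : Fin P) (k : ℕ), 1 ≤ k →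
      Measure.map (Λ (p, k)) μ = gdpMeasure (α k) (η k))
    (S : ℝ)
    (hS : HasSum (fun k : ℕ =>
      variance (Λ (⟨0, hP⟩, k + K + 1)) μ +
        (∫ ω, |Λ (⟨0, hP⟩, k + K + 1) ω| ∂μ) ^ 2) S)
    (ε : ℝ) (hε : 0 < ε) :
    μ {ω | ∃ i j : Fin P,
        ENNReal.ofReal ε ≤
          ∑' k : ℕ, ENNReal.ofReal (|Λ (i, k + K + 1) ω| * |Λ (j, k + K + 1) ω|)}
      ≤ ENNReal.ofReal ((P : ℝ) ^ 2 / ε * S) := by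
  set Z : ℕ → Ω → ℝ := fun k => Λ (⟨0, hP⟩, k + K + 1)
  have hident : ∀ p k, IdentDistrib (Λ (p, k + K + 1)) (Z k) μ μ := fun p k =>
    ⟨(hmeas _).aemeasurable, (hmeas _).aemeasurable,
      by rw [hlaw _ _ (by omega), hlaw _ _ (by omega)]⟩
  have hZ : ∀ k, MemLp (Z k) 2 μ := fun k =>
    HasGDP.memLp_two ⟨hmeas _, hlaw _ _ (by omega)⟩ (hα _ (by omega)) (hη _ (by omega))
  have hterm : ∀ i j k,
      ∫⁻ ω, ENNReal.ofReal (|Λ (i, k + K + 1) ω| * |Λ (j, k + K + 1) ω|) ∂μ ≤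
        ENNReal.ofReal (variance (Z k) μ + (∫ ω, |Z k ω| ∂μ) ^ 2) := fun i j k =>
    (lintegral_abs_mul_abs_le_integral_sq (hident i k) (hident j k) (hZ k)).trans
      (ENNReal.ofReal_le_ofReal (integral_sq_le_variance_add_sq_integral_abs (hZ k)))
  have hmeas_term : ∀ (ij : Fin P × Fin P) k, AEMeasurable
      (fun ω => ENNReal.ofReal (|Λ (ij.1, k + K + 1) ω| * |Λ (ij.2, k + K + 1) ω|)) μ :=
    fun ij k => ((hmeas _).abs.mul (hmeas _).abs).ennreal_ofReal.aemeasurable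
  have hmarkov := measure_exists_le_le_card_mul_div (μ := μ)
    (f := fun (ij : Fin P × Fin P) ω =>
      ∑' k, ENNReal.ofReal (|Λ (ij.1, k + K + 1) ω| * |Λ (ij.2, k + K + 1) ω|))
    (fun ij => AEMeasurable.tsum (hmeas_term ij))
    (fun ij => lintegral_tsum_le_ofReal_of_hasSum (hmeas_term ij) hS
      (fun k => add_nonneg (variance_nonneg _ _) (sq_nonneg _)) (hterm ij.1 ij.2))
    (by simpa using hε) ENNReal.ofReal_ne_top
  simp only [Prod.exists, Fintype.card_prod, Fintype.card_fin] at hmarkov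
  refine hmarkov.trans_eq ?_
  rw [← ENNReal.ofReal_div_of_pos hε, ← ENNReal.ofReal_natCast,
    ← ENNReal.ofReal_mul (by positivity)]
  congr 1
  push_cast
  ring

theorem gdp_tail_sum_markov_bound {Ω : Type*} [MeasurableSpace Ω] (μ : Measure Ω)
    [IsProbabilityMeasure μ] (P : ℕ) (hP : 0 < P) (K : ℕ) (α η : ℕ → ℝ)
    (hα : ∀ k : ℕ, 1 ≤ k → 2 < α k) (hη : ∀ k : ℕ, 1 ≤ k → 0 < η k)
    (Λ : Fin P × ℕ → Ω → ℝ) (hmeas : ∀ pk, Measurable (Λ pk))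
    (hindep : ProbabilityTheory.iIndepFun Λ μ)
    (hlaw : ∀ (p : Fin P) (k : ℕ), 1 ≤ k →
      Measure.map (Λ (p, k)) μ = gdpMeasure (α k) (η k))
    (S : ℝ)
    (hS : HasSum (fun k : ℕ =>
      variance (Λ (⟨0, hP⟩, k + K + 1)) μ +
        (∫ ω, |Λ (⟨0, hP⟩, k + K + 1) ω| ∂μ) ^ 2) S)
    (ε : ℝ) (hε : 0 < ε) :
    μ {ω | ∃ i j : Fin P,
        ENNReal.ofReal ε ≤
          ∑' k : ℕ, ENNReal.ofReal (|Λ (i, k + K + 1) ω| * |Λ (j, k + K + 1) ω|)}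
      ≤ ENNReal.ofReal ((P : ℝ) ^ 2 / ε * S) :=
  gdp_tail_sum_markov_bound_general μ P hP K α η hα hη Λ hmeas hlaw S hS ε hε
end

section
/- Let δ > 2 and 0 < ρ < 1, set α_k = δ and η_k = ρ^k for k ≥ 1, fix P ≥ 1, and let (λ_{pk})_{1≤p≤P, k≥1} be mutually independent real random variables with λ_{pk} distributed as GDP(α_k, η_k). Then there exists a constant C > 0 depending only on δ and ρ such that for every ε ∈ (0, 1): if K₀ is any integer with K₀ ≥ C·(1 + log(P/ε²)), then for every K ≥ K₀, with probability greater than 1 − ε, for all i, j ∈ {1, …, P} the series ∑_{k=K+1}^∞ |λ_{ik}||λ_{jk}| converges and is strictly less than ε. In particular K₀ can be taken of order (log(1/ρ))^{−1} log(P/ε²). -/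
open MeasureTheory ProbabilityTheory

/-!
The two-sided GDP(α, η) tail is explicit: `P(|λ| > t) = (1 + t/η)^(-α)`. At the level
`t = √η` with `α ≥ 2` and `η ≤ 1` this is at most `η`. Put `η_k = ρ^k` and consider the event
`|λ_{pk}| ≤ √(ρ^k)` for all `p` and all `k > K`. On it every product `|λ_{ik}| |λ_{jk}|` is
at most `ρ^k`, so each tail series is dominated by `ρ^(K+1) / (1 - ρ)`. By the union bound the
event fails with probability at most `P ρ^(K+1) / (1 - ρ)`, and the lower bound on `K` makes
this smaller than `ε`.
-/

open Set Filter Topology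

lemma gdpMeasure_neg (α η : ℝ) (s : Set ℝ) : gdpMeasure α η (-s) = gdpMeasure α η s := by
  rw [gdpMeasure, withDensity_apply', withDensity_apply', ← Set.neg_preimage,
    ← (Measure.measurePreserving_neg volume).setLIntegral_comp_preimage_emb
      (Homeomorph.neg ℝ).measurableEmbedding]
  simp [gdpPdf, abs_neg]

noncomputable def gdpHalfTail (α η t : ℝ) : ℝ :=
  (1 + t / η) ^ (-α) / 2

lemma hasDerivAt_gdpHalfTail {α η x : ℝ} (hη : 0 < η) (hx : 0 ≤ x) :
    HasDerivAt (gdpHalfTail α η) (-gdpPdf α η x) x := by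
  have hbase : 0 < 1 + x / η := by positivity
  refine ((((hasDerivAt_id' x).div_const η).const_add 1).rpow_const
    (Or.inl hbase.ne')).div_const 2 |>.congr_deriv ?_
  rw [gdpPdf, abs_of_nonneg hx, show -α - 1 = -(α + 1) by ring]
  field_simp

lemma tendsto_gdpHalfTail_atTop {α η : ℝ} (hα : 0 < α) (hη : 0 < η) :
    Tendsto (gdpHalfTail α η) atTop (𝓝 0) := by
  have h : Tendsto (fun y : ℝ => 1 + y / η) atTop atTop :=
    tendsto_atTop_add_const_left _ _ (tendsto_id.atTop_div_const hη)
  have := ((tendsto_rpow_neg_atTop hα).comp h).div_const 2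
  rwa [zero_div] at this

lemma gdpMeasure_Ioi {α η t : ℝ} (hα : 0 < α) (hη : 0 < η) (ht : 0 ≤ t) :
    gdpMeasure α η (Ioi t) = ENNReal.ofReal (gdpHalfTail α η t) := by
  have hderiv : ∀ x ∈ Ici t, HasDerivAt (fun y => -gdpHalfTail α η y) (gdpPdf α η x) x :=
    fun x hx => (hasDerivAt_gdpHalfTail hη (ht.trans hx)).neg.congr_deriv (neg_neg _)
  have hlim : Tendsto (fun y => -gdpHalfTail α η y) atTop (𝓝 0) := by
    simpa using (tendsto_gdpHalfTail_atTop hα hη).neg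
  have hpos : ∀ x ∈ Ioi t, 0 ≤ gdpPdf α η x := fun x _ => by unfold gdpPdf; positivity
  rw [gdpMeasure, withDensity_apply _ measurableSet_Ioi, ← ofReal_integral_eq_lintegral_ofReal
    (integrableOn_Ioi_deriv_of_nonneg' hderiv hpos hlim)
    ((ae_restrict_mem measurableSet_Ioi).mono hpos),
    integral_Ioi_of_hasDerivAt_of_nonneg' hderiv hpos hlim, zero_sub, neg_neg]

lemma gdpMeasure_abs_gt {α η t : ℝ} (hα : 0 < α) (hη : 0 < η) (ht : 0 ≤ t) :
    gdpMeasure α η {x | t < |x|} = ENNReal.ofReal ((1 + t / η) ^ (-α)) := by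
  have hsplit : {x : ℝ | t < |x|} = -Ioi t ∪ Ioi t := by
    ext x; simp [lt_abs, or_comm, lt_neg]
  rw [hsplit, measure_union _ measurableSet_Ioi, gdpMeasure_neg, gdpMeasure_Ioi hα hη ht,
    ← ENNReal.ofReal_add (by unfold gdpHalfTail; positivity) (by unfold gdpHalfTail; positivity),
    gdpHalfTail, add_halves]
  exact Set.disjoint_left.2 fun x hx hx' => by simp at hx hx'; linarith

lemma gdpMeasure_abs_gt_sqrt_le {δ η : ℝ} (hδ : 2 ≤ δ) (hη0 : 0 < η) (hη1 : η ≤ 1) :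
    gdpMeasure δ η {x | √η < |x|} ≤ ENNReal.ofReal η := by
  rw [gdpMeasure_abs_gt (by linarith) hη0 (Real.sqrt_nonneg η)]
  refine ENNReal.ofReal_le_ofReal ?_
  have hsqrt : 0 < √η := Real.sqrt_pos.2 hη0
  calc (1 + √η / η) ^ (-δ) ≤ (√η / η) ^ (-δ) :=
        Real.rpow_le_rpow_of_nonpos (by positivity) (by linarith) (by linarith)
    _ = √η ^ δ := by
        rw [Real.sqrt_div_self', one_div, Real.inv_rpow hsqrt.le, Real.rpow_neg hsqrt.le, inv_inv]
    _ ≤ √η ^ (2 : ℝ) :=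
        Real.rpow_le_rpow_of_exponent_ge hsqrt (Real.sqrt_le_one.2 hη1) hδ
    _ = η := by rw [Real.rpow_two, Real.sq_sqrt hη0.le]

lemma hasSum_pow_add_succ {ρ : ℝ} (hρ0 : 0 ≤ ρ) (hρ1 : ρ < 1) (n : ℕ) :
    HasSum (fun k : ℕ => ρ ^ (k + n + 1)) (ρ ^ (n + 1) / (1 - ρ)) := by
  rw [div_eq_mul_inv, show (fun k : ℕ => ρ ^ (k + n + 1)) = fun k => ρ ^ (n + 1) * ρ ^ k from
    funext fun k => by ring]
  exact (hasSum_geometric_of_lt_one hρ0 hρ1).mul_left _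

lemma summable_abs_mul_abs_and_tsum_lt {f g u : ℕ → ℝ} {s ε : ℝ} (hu : HasSum u s)
    (hu0 : ∀ k, 0 ≤ u k) (hf : ∀ k, |f k| ≤ √(u k)) (hg : ∀ k, |g k| ≤ √(u k)) (hs : s < ε) :
    Summable (fun k => |f k| * |g k|) ∧ ∑' k, |f k| * |g k| < ε := by
  have hle : ∀ k, |f k| * |g k| ≤ u k := fun k =>
    calc |f k| * |g k| ≤ √(u k) * √(u k) :=
          mul_le_mul (hf k) (hg k) (abs_nonneg _) (Real.sqrt_nonneg _)
      _ = u k := Real.mul_self_sqrt (hu0 k)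
  have hsum : Summable (fun k => |f k| * |g k|) :=
    hu.summable.of_nonneg_of_le (fun k => by positivity) hle
  exact ⟨hsum, (hsum.tsum_le_tsum hle hu.summable).trans_lt (hu.tsum_eq ▸ hs)⟩

section Measure

variable {Ω : Type*} [MeasurableSpace Ω] {μ : Measure Ω}

lemma measure_sqrt_lt_abs_le_of_map_eq_gdpMeasure {X : Ω → ℝ} {δ η : ℝ} (hX : Measurable X)
    (hlaw : μ.map X = gdpMeasure δ η) (hδ : 2 ≤ δ) (hη0 : 0 < η) (hη1 : η ≤ 1) :
    μ {ω | √η < |X ω|} ≤ ENNReal.ofReal η := by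
  have hS : MeasurableSet {x : ℝ | √η < |x|} := measurableSet_lt measurable_const measurable_abs
  calc μ {ω | √η < |X ω|} = μ.map X {x | √η < |x|} := (Measure.map_apply hX hS).symm
    _ ≤ ENNReal.ofReal η := hlaw ▸ gdpMeasure_abs_gt_sqrt_le hδ hη0 hη1

lemma measure_iUnion_le_card_mul {ι : Type*} [Fintype ι] {A : ι → ℕ → Set Ω} {u : ℕ → ℝ}
    {s : ℝ} (hu : HasSum u s) (hu0 : ∀ k, 0 ≤ u k)
    (hA : ∀ i k, μ (A i k) ≤ ENNReal.ofReal (u k)) :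
    μ (⋃ i, ⋃ k, A i k) ≤ Fintype.card ι * ENNReal.ofReal s :=
  calc μ (⋃ i, ⋃ k, A i k) ≤ ∑ i, μ (⋃ k, A i k) := measure_iUnion_fintype_le _ _
    _ ≤ ∑ _i : ι, ∑' k, ENNReal.ofReal (u k) :=
        Finset.sum_le_sum fun i _ => (measure_iUnion_le _).trans (ENNReal.tsum_le_tsum (hA i))
    _ = Fintype.card ι * ENNReal.ofReal s := by
        rw [← ENNReal.ofReal_tsum_of_nonneg hu0 hu.summable, hu.tsum_eq]
        simp

lemma ofReal_one_sub_lt_measure [IsProbabilityMeasure μ] {s : Set Ω} {a ε : ℝ}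
    (h : μ sᶜ ≤ ENNReal.ofReal a) (ha0 : 0 ≤ a) (ha : a < ε) (hε : ε ≤ 1) :
    ENNReal.ofReal (1 - ε) < μ s := by
  have hcover : 1 ≤ μ s + ENNReal.ofReal a :=
    calc 1 = μ (s ∪ sᶜ) := by rw [union_compl_self, measure_univ]
      _ ≤ μ s + μ sᶜ := measure_union_le _ _
      _ ≤ μ s + ENNReal.ofReal a := by gcongr
  calc ENNReal.ofReal (1 - ε) < ENNReal.ofReal (1 - a) :=
        (ENNReal.ofReal_lt_ofReal_iff (by linarith)).2 (by linarith)
    _ = 1 - ENNReal.ofReal a := by rw [ENNReal.ofReal_sub _ ha0, ENNReal.ofReal_one]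
    _ ≤ μ s := tsub_le_iff_right.2 hcover

end Measure

lemma pow_le_of_log_inv_le {ρ x : ℝ} (hρ : 0 < ρ) (hx : 0 < x) {K : ℕ}
    (h : Real.log (1 / x) ≤ K * Real.log (1 / ρ)) : ρ ^ K ≤ x := by
  rw [one_div, one_div, Real.log_inv, Real.log_inv] at h
  rw [← Real.log_le_log_iff (pow_pos hρ K) hx, Real.log_pow]
  linarith

-- Chosen so that `K ≥ C (1 + log (P / ε²))` forces `ρ ^ K ≤ (1 - ρ) ε² / P`.
noncomputable def truncationConstant (ρ : ℝ) : ℝ :=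
  (1 + Real.log (1 / (1 - ρ))) / Real.log (1 / ρ)

lemma truncationConstant_pos {ρ : ℝ} (hρ0 : 0 < ρ) (hρ1 : ρ < 1) : 0 < truncationConstant ρ := by
  have : 0 ≤ Real.log (1 / (1 - ρ)) :=
    Real.log_nonneg (by rw [le_div_iff₀ (by linarith)]; linarith)
  have : 0 < Real.log (1 / ρ) := Real.log_pos (by rw [lt_div_iff₀ hρ0]; linarith)
  unfold truncationConstant
  positivity

lemma mul_geometric_tail_lt {ρ ε P : ℝ} {K : ℕ} (hρ0 : 0 < ρ) (hρ1 : ρ < 1) (hε0 : 0 < ε)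
    (hε1 : ε < 1) (hP : 1 ≤ P) (hK : truncationConstant ρ * (1 + Real.log (P / ε ^ 2)) ≤ K) :
    P * (ρ ^ (K + 1) / (1 - ρ)) < ε := by
  have hρ' : 0 < 1 - ρ := by linarith
  have hL : 0 ≤ Real.log (1 / (1 - ρ)) :=
    Real.log_nonneg (by rw [le_div_iff₀ (by linarith)]; linarith)
  have hM : 0 ≤ Real.log (P / ε ^ 2) :=
    Real.log_nonneg (by rw [le_div_iff₀ (by positivity)]; nlinarith)
  have hlogρ : 0 < Real.log (1 / ρ) := Real.log_pos (by rw [lt_div_iff₀ hρ0]; linarith)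
  have hlog : Real.log (1 / ((1 - ρ) * ε ^ 2 / P)) ≤ K * Real.log (1 / ρ) :=
    calc Real.log (1 / ((1 - ρ) * ε ^ 2 / P))
        = Real.log (1 / (1 - ρ)) + Real.log (P / ε ^ 2) := by
          rw [← Real.log_mul (by positivity) (by positivity)]
          congr 1
          field_simp
      _ ≤ (1 + Real.log (1 / (1 - ρ))) * (1 + Real.log (P / ε ^ 2)) := by nlinarith
      _ = truncationConstant ρ * (1 + Real.log (P / ε ^ 2)) * Real.log (1 / ρ) := by
          unfold truncationConstant
          field_simp
      _ ≤ K * Real.log (1 / ρ) := mul_le_mul_of_nonneg_right hK hlogρ.le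
  have hρK := pow_le_of_log_inv_le hρ0 (by positivity) hlog
  calc P * (ρ ^ (K + 1) / (1 - ρ)) = ρ * (P * ρ ^ K / (1 - ρ)) := by ring
    _ ≤ ρ * ε ^ 2 := by
        gcongr
        rw [div_le_iff₀ hρ', ← le_div_iff₀' (by positivity), mul_comm]
        exact hρK
    _ < ε := by nlinarith

theorem gdp_truncation_close_condition_II_general {Ω : Type*} [MeasurableSpace Ω] (μ : Measure Ω)
    [IsProbabilityMeasure μ] (δ ρ : ℝ) (hδ : 2 < δ) (hρ0 : 0 < ρ) (hρ1 : ρ < 1)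
    (P : ℕ) (hP : 0 < P) (Λ : Fin P × ℕ → Ω → ℝ) (hmeas : ∀ pk, Measurable (Λ pk))
    (hlaw : ∀ (p : Fin P) (k : ℕ), 1 ≤ k →
      Measure.map (Λ (p, k)) μ = gdpMeasure δ (ρ ^ k)) :
    ∃ C : ℝ, 0 < C ∧ ∀ ε : ℝ, 0 < ε → ε < 1 → ∀ K₀ : ℕ,
      C * (1 + Real.log ((P : ℝ) / ε ^ 2)) ≤ (K₀ : ℝ) → ∀ K : ℕ, K₀ ≤ K →
      ENNReal.ofReal (1 - ε) <
        μ {ω | ∀ i j : Fin P,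
          Summable (fun k : ℕ => |Λ (i, k + K + 1) ω| * |Λ (j, k + K + 1) ω|) ∧
          (∑' k : ℕ, |Λ (i, k + K + 1) ω| * |Λ (j, k + K + 1) ω|) < ε} := by
  refine ⟨truncationConstant ρ, truncationConstant_pos hρ0 hρ1, ?_⟩
  intro ε hε0 hε1 K₀ hK₀ K hK
  have hP1 : (1 : ℝ) ≤ P := by exact_mod_cast hP
  have htail := hasSum_pow_add_succ hρ0.le hρ1 K
  have hu0 : ∀ k, 0 ≤ ρ ^ (k + K + 1) := fun k => by positivity
  have hsmall := mul_geometric_tail_lt hρ0 hρ1 hε0 hε1 hP1 (hK₀.trans (by exact_mod_cast hK))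
  set G := {ω | ∀ p k, |Λ (p, k + K + 1) ω| ≤ √(ρ ^ (k + K + 1))}
  have hGc : μ Gᶜ ≤ ENNReal.ofReal (P * (ρ ^ (K + 1) / (1 - ρ))) := by
    have hcompl : Gᶜ = ⋃ p, ⋃ k, {ω | √(ρ ^ (k + K + 1)) < |Λ (p, k + K + 1) ω|} := by
      ext ω
      simp [G]
    rw [hcompl, ENNReal.ofReal_mul (by positivity), ENNReal.ofReal_natCast]
    simpa using measure_iUnion_le_card_mul htail hu0 fun p k =>
      measure_sqrt_lt_abs_le_of_map_eq_gdpMeasure (hmeas _) (hlaw p _ (by omega)) hδ.le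
        (pow_pos hρ0 _) (pow_le_one₀ hρ0.le hρ1.le)
  refine (ofReal_one_sub_lt_measure hGc (by positivity) hsmall hε1.le).trans_le (measure_mono ?_)
  exact fun ω hω i j => summable_abs_mul_abs_and_tsum_lt htail hu0 (hω i) (hω j)
    ((le_mul_of_one_le_left (by positivity) hP1).trans_lt hsmall)

theorem gdp_truncation_close_condition_II {Ω : Type*} [MeasurableSpace Ω] (μ : Measure Ω)
    [IsProbabilityMeasure μ] (δ ρ : ℝ) (hδ : 2 < δ) (hρ0 : 0 < ρ) (hρ1 : ρ < 1)
    (P : ℕ) (hP : 0 < P) (Λ : Fin P × ℕ → Ω → ℝ) (hmeas : ∀ pk, Measurable (Λ pk))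
    (hindep : ProbabilityTheory.iIndepFun Λ μ)
    (hlaw : ∀ (p : Fin P) (k : ℕ), 1 ≤ k →
      Measure.map (Λ (p, k)) μ = gdpMeasure δ (ρ ^ k)) :
    ∃ C : ℝ, 0 < C ∧ ∀ ε : ℝ, 0 < ε → ε < 1 → ∀ K₀ : ℕ,
      C * (1 + Real.log ((P : ℝ) / ε ^ 2)) ≤ (K₀ : ℝ) → ∀ K : ℕ, K₀ ≤ K →
      ENNReal.ofReal (1 - ε) <
        μ {ω | ∀ i j : Fin P,
          Summable (fun k : ℕ => |Λ (i, k + K + 1) ω| * |Λ (j, k + K + 1) ω|) ∧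
          (∑' k : ℕ, |Λ (i, k + K + 1) ω| * |Λ (j, k + K + 1) ω|) < ε} :=
  gdp_truncation_close_condition_II_general μ δ ρ hδ hρ0 hρ1 P hP Λ hmeas hlaw
end
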